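/- arXiv:1005.1305 — 7 statements merged into one kernel-verified Lean document; each statement's English description precedes it below -/
import Mathlib

section
/- Let G be the set of matrices M = [[a,b],[c,d]] in GL_2(Z) (integer entries, determinant ±1) such that cθ+d ≠ 0 for every θ ∈ [0,1] and the linear fractional transformation θ ↦ (aθ+b)/(cθ+d) maps the interval [0,1] into itself. Then every M ∈ G lies, up to sign, in the multiplicative submonoid of 2×2 integer matrices generated by A and B; that is, M or −M is a (possibly empty) product of copies of A and B. -/
open Matrix

/-- A = [[1,0],[1,1]] -/
def butterflyA : Matrix (Fin 2) (Fin 2) ℤ := !![1, 0; 1, 1]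

/-- B = [[-1,1],[0,1]] -/
def butterflyB : Matrix (Fin 2) (Fin 2) ℤ := !![-1, 1; 0, 1]

private lemma mem_closure_key : ∀ n : ℕ, ∀ a b c d : ℤ, c + 2*d ≤ n →
    (a*d - b*c = 1 ∨ a*d - b*c = -1) → 0 < d → 0 < c + d →
    0 ≤ b → b ≤ d → 0 ≤ a + b → a + b ≤ c + d →
    !![a, b; c, d] ∈
      Submonoid.closure ({butterflyA, butterflyB} : Set (Matrix (Fin 2) (Fin 2) ℤ)) := by
  intro n
  induction n with
  | zero =>
    intro a b c d hn _ hd hcd _ _ _ _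
    simp only [Nat.cast_zero] at hn; omega
  | succ n ih =>
    intro a b c d hn hdet hd hcd hb hbd hab habcd
    have hAmem : butterflyA ∈
        Submonoid.closure ({butterflyA, butterflyB} : Set (Matrix (Fin 2) (Fin 2) ℤ)) :=
      Submonoid.subset_closure (by simp)
    have hBmem : butterflyB ∈
        Submonoid.closure ({butterflyA, butterflyB} : Set (Matrix (Fin 2) (Fin 2) ℤ)) :=
      Submonoid.subset_closure (by simp)
    simp only [Nat.cast_succ] at hn
    by_cases hA : 2*b ≤ d ∧ 2*(a+b) ≤ c+d
    · -- descend by A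
      have hpos : 1 ≤ a + 2*b := by
        by_contra h
        obtain ⟨ha0, hb0⟩ : a = 0 ∧ b = 0 := by omega
        subst ha0; subst hb0; simp at hdet
      have hdet' : a*(d-b) - b*(c-a) = 1 ∨ a*(d-b) - b*(c-a) = -1 := by
        rcases hdet with h | h
        · left; linear_combination h
        · right; linear_combination h
      have key := ih a b (c-a) (d-b) (by omega) hdet' (by omega) (by omega)
        hb (by omega) hab (by omega)
      have heq : !![a,b;c,d] = butterflyA * !![a,b;c-a,d-b] := by
        unfold butterflyA; rw [Matrix.mul_fin_two]; norm_num
      rw [heq]; exact mul_mem hAmem key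
    · by_cases hB : d ≤ 2*b ∧ c+d ≤ 2*(a+b)
      · -- descend by B*A
        have hlt : a + 2*b ≤ c + 2*d - 1 := by
          by_contra h
          have h1 : b = d := by omega
          have h2 : a = c := by omega
          rw [h1, h2] at hdet
          have h0 : c*d - d*c = 0 := by ring
          rcases hdet with h | h <;> linarith
        have hdet' : (c-a)*b - (d-b)*a = 1 ∨ (c-a)*b - (d-b)*a = -1 := by
          rcases hdet with h | h
          · right; linear_combination -h
          · left; linear_combination -h
        have key := ih (c-a) (d-b) a b (by omega) hdet' (by omega) (by omega)
          (by omega) (by omega) (by omega) (by omega)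
        have heq : !![a,b;c,d] = butterflyB * (butterflyA * !![c-a,d-b;a,b]) := by
          unfold butterflyA butterflyB
          rw [Matrix.mul_fin_two, Matrix.mul_fin_two]; norm_num
        rw [heq]; exact mul_mem hBmem (mul_mem hAmem key)
      · -- base case: the two endpoints strictly straddle 1/2
        rcases le_or_gt (2*b) d with h1 | h1
        · -- 2b < d and 2(a+b) > c+d : M = identity
          have h2 : c + d + 1 ≤ 2*(a+b) := by omega
          have h3 : 2*b + 1 ≤ d := by omega
          have hkey : d*(2*(a+b) - (c+d)) + (c+d)*(d - 2*b) = 2*(a*d - b*c) := by ring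
          have p1 : d ≤ d*(2*(a+b) - (c+d)) := by nlinarith
          have p2 : (c+d) ≤ (c+d)*(d - 2*b) := by nlinarith
          have hkey2 : d*(2*(a+b) - (c+d)) + (c+d)*(d - 2*b) = 2 := by
            rcases hdet with h | h
            · rw [hkey, h]; norm_num
            · exfalso; rw [h] at hkey; linarith
          have hd1 : d = 1 := by linarith
          have hc0 : c = 0 := by linarith
          subst hd1; subst hc0
          have hb0 : b = 0 ∧ a = 1 := by omega
          have : !![a,b;(0:ℤ),1] = (1 : Matrix (Fin 2) (Fin 2) ℤ) := by
            rw [hb0.1, hb0.2, Matrix.one_fin_two]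
          rw [this]; exact one_mem _
        · -- 2b > d and 2(a+b) < c+d : M = B
          have h2 : 2*(a+b) + 1 ≤ c + d := by omega
          have hkey : d*((c+d) - 2*(a+b)) + (c+d)*(2*b - d) = -(2*(a*d - b*c)) := by ring
          have p1 : d ≤ d*((c+d) - 2*(a+b)) := by nlinarith
          have p2 : (c+d) ≤ (c+d)*(2*b - d) := by nlinarith
          have hkey2 : d*((c+d) - 2*(a+b)) + (c+d)*(2*b - d) = 2 := by
            rcases hdet with h | h
            · exfalso; rw [h] at hkey; linarith
            · rw [hkey, h]; norm_num
          have hd1 : d = 1 := by linarith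
          have hc0 : c = 0 := by linarith
          subst hd1; subst hc0
          have hb1 : b = 1 ∧ a = -1 := by omega
          have : !![a,b;(0:ℤ),1] = butterflyB := by rw [hb1.1, hb1.2]; rfl
          rw [this]; exact hBmem

private lemma div_bounds_pos' {x y : ℝ} (hy : 0 < y) (h0 : 0 ≤ x/y) (h1 : x/y ≤ 1) :
    0 ≤ x ∧ x ≤ y := by
  have hx : x = (x/y)*y := (div_mul_cancel₀ x hy.ne').symm
  constructor
  · nlinarith [hx, h0, h1, hy]
  · nlinarith [hx, h0, h1, hy]

private lemma div_bounds_neg' {x y : ℝ} (hy : y < 0) (h0 : 0 ≤ x/y) (h1 : x/y ≤ 1) :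
    y ≤ x ∧ x ≤ 0 := by
  have hx : x = (x/y)*y := (div_mul_cancel₀ x hy.ne).symm
  constructor
  · nlinarith [hx, h0, h1, hy]
  · nlinarith [hx, h0, h1, hy]

theorem stmt_0 (a b c d : ℤ)
    (hdet : a * d - b * c = 1 ∨ a * d - b * c = -1)
    (hden : ∀ θ : ℝ, θ ∈ Set.Icc (0 : ℝ) 1 → (c : ℝ) * θ + (d : ℝ) ≠ 0)
    (hmap : ∀ θ : ℝ, θ ∈ Set.Icc (0 : ℝ) 1 →
      ((a : ℝ) * θ + (b : ℝ)) / ((c : ℝ) * θ + (d : ℝ)) ∈ Set.Icc (0 : ℝ) 1) :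
    !![a, b; c, d] ∈
      Submonoid.closure ({butterflyA, butterflyB} : Set (Matrix (Fin 2) (Fin 2) ℤ)) ∨
    -(!![a, b; c, d]) ∈
      Submonoid.closure ({butterflyA, butterflyB} : Set (Matrix (Fin 2) (Fin 2) ℤ)) := by
  have hd0 : (d:ℝ) ≠ 0 := by have := hden 0 (by norm_num); simpa using this
  have hcd0 : (c:ℝ) + d ≠ 0 := by have := hden 1 (by norm_num); simpa using this
  have hsign : 0 < (d:ℝ) * ((c:ℝ) + d) := by
    rcases lt_or_gt_of_ne (mul_ne_zero hd0 hcd0) with h | h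
    · exfalso
      have hcont : ContinuousOn (fun θ : ℝ => (c:ℝ)*θ + d) (Set.uIcc 0 1) := by fun_prop
      have h0 : (0:ℝ) ∈
          Set.uIcc ((fun θ : ℝ => (c:ℝ)*θ + d) 0) ((fun θ : ℝ => (c:ℝ)*θ + d) 1) := by
        simp only [mul_zero, zero_add, mul_one, Set.mem_uIcc]
        rcases mul_neg_iff.mp h with ⟨h1, h2⟩ | ⟨h1, h2⟩
        · right; constructor <;> linarith
        · left; constructor <;> linarith
      obtain ⟨θ, hθ, hfθ⟩ := intermediate_value_uIcc hcont h0
      exact hden θ (by rwa [Set.uIcc_of_le (by norm_num : (0:ℝ) ≤ 1)] at hθ) hfθ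
    · exact h
  have m0 := hmap 0 (by norm_num)
  have m1 := hmap 1 (by norm_num)
  simp only [mul_zero, zero_add, mul_one, Set.mem_Icc] at m0 m1
  rcases mul_pos_iff.mp hsign with ⟨hdr, hcdr⟩ | ⟨hdr, hcdr⟩
  · -- d > 0 and c + d > 0
    obtain ⟨e1, e2⟩ := div_bounds_pos' hdr m0.1 m0.2
    obtain ⟨e3, e4⟩ := div_bounds_pos' hcdr m1.1 m1.2
    left
    refine mem_closure_key (c + 2*d).toNat a b c d (Int.self_le_toNat _) hdet
      ?_ ?_ ?_ ?_ ?_ ?_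
    · exact_mod_cast hdr
    · exact_mod_cast hcdr
    · exact_mod_cast e1
    · exact_mod_cast e2
    · exact_mod_cast e3
    · exact_mod_cast e4
  · -- d < 0 and c + d < 0
    obtain ⟨e1, e2⟩ := div_bounds_neg' hdr m0.1 m0.2
    obtain ⟨e3, e4⟩ := div_bounds_neg' hcdr m1.1 m1.2
    right
    have hneg : -(!![a,b;c,d]) = !![-a,-b;-c,-d] := by
      ext i j; fin_cases i <;> fin_cases j <;> simp
    rw [hneg]
    refine mem_closure_key (-c + 2*(-d)).toNat (-a) (-b) (-c) (-d)
      (Int.self_le_toNat _) ?_ ?_ ?_ ?_ ?_ ?_ ?_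
    · rcases hdet with h | h
      · left; linear_combination h
      · right; linear_combination h
    · have : (d:ℝ) < 0 := hdr
      have : d < 0 := by exact_mod_cast this
      omega
    · have : (c:ℝ) + d < 0 := hcdr
      have : c + d < 0 := by exact_mod_cast this
      omega
    · have : (b:ℝ) ≤ 0 := e2
      have : b ≤ 0 := by exact_mod_cast this
      omega
    · have : (d:ℝ) ≤ b := e1
      have : d ≤ b := by exact_mod_cast this
      omega
    · have : (a:ℝ) + b ≤ 0 := by linarith [e4]
      have : a + b ≤ 0 := by exact_mod_cast this
      omega
    · have : (c:ℝ) + d ≤ a + b := by linarith [e3]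
      have : c + d ≤ a + b := by exact_mod_cast this
      omega
end

section
/- Every matrix M = [[a,b],[c,d]] in the multiplicative submonoid of 2×2 integer matrices generated by A and B satisfies: for every θ ∈ [0,1], cθ+d > 0 and (aθ+b)/(cθ+d) ∈ [0,1]. In other words, each such product induces a linear fractional transformation, with nonvanishing denominator on [0,1], mapping [0,1] into itself. -/
open Matrix

private def Good (M : Matrix (Fin 2) (Fin 2) ℤ) : Prop :=
  ∀ θ : ℝ, θ ∈ Set.Icc (0 : ℝ) 1 →
    0 < (M 1 0 : ℝ) * θ + (M 1 1 : ℝ) ∧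
    ((M 0 0 : ℝ) * θ + (M 0 1 : ℝ)) / ((M 1 0 : ℝ) * θ + (M 1 1 : ℝ)) ∈ Set.Icc (0 : ℝ) 1

private lemma good_closure (M : Matrix (Fin 2) (Fin 2) ℤ)
    (hM : M ∈ Submonoid.closure ({butterflyA, butterflyB} : Set (Matrix (Fin 2) (Fin 2) ℤ))) :
    Good M := by
  induction hM using Submonoid.closure_induction with
  | mem x hx =>
    rcases hx with hx | hx
    · subst hx
      intro θ hθ
      obtain ⟨h0, h1⟩ := hθ
      simp only [butterflyA]
      norm_num
      constructor
      · linarith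
      · constructor
        · positivity
        · rw [div_le_one (by linarith)]; linarith
    · simp only [Set.mem_singleton_iff] at hx
      subst hx
      intro θ hθ
      obtain ⟨h0, h1⟩ := hθ
      simp only [butterflyB]
      norm_num
      constructor <;> linarith
  | one =>
    intro θ hθ
    obtain ⟨h0, h1⟩ := hθ
    simp only [Matrix.one_apply]
    norm_num
    exact ⟨h0, h1⟩
  | mul x y hx hy ihx ihy =>
    intro θ hθ
    obtain ⟨hd, hr⟩ := ihy θ hθ
    set n : ℝ := (y 0 0 : ℝ) * θ + (y 0 1 : ℝ) with hn
    set d : ℝ := (y 1 0 : ℝ) * θ + (y 1 1 : ℝ) with hdd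
    obtain ⟨hd', hr'⟩ := ihx (n / d) hr
    have hmul : ∀ i j : Fin 2, ((x * y) i j : ℝ) =
        (x i 0 : ℝ) * (y 0 j : ℝ) + (x i 1 : ℝ) * (y 1 j : ℝ) := by
      intro i j
      rw [Matrix.mul_apply, Fin.sum_univ_two]
      push_cast
      ring
    have hden : ((x * y) 1 0 : ℝ) * θ + ((x * y) 1 1 : ℝ)
        = d * ((x 1 0 : ℝ) * (n / d) + (x 1 1 : ℝ)) := by
      rw [hmul, hmul]
      field_simp
      ring
    have hnum : ((x * y) 0 0 : ℝ) * θ + ((x * y) 0 1 : ℝ)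
        = d * ((x 0 0 : ℝ) * (n / d) + (x 0 1 : ℝ)) := by
      rw [hmul, hmul]
      field_simp
      ring
    constructor
    · rw [hden]; positivity
    · rw [hnum, hden, mul_div_mul_left _ _ (ne_of_gt hd)]
      exact hr'

theorem stmt_1 (M : Matrix (Fin 2) (Fin 2) ℤ)
    (hM : M ∈ Submonoid.closure ({butterflyA, butterflyB} : Set (Matrix (Fin 2) (Fin 2) ℤ)))
    (θ : ℝ) (hθ : θ ∈ Set.Icc (0 : ℝ) 1) :
    0 < (M 1 0 : ℝ) * θ + (M 1 1 : ℝ) ∧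
    ((M 0 0 : ℝ) * θ + (M 0 1 : ℝ)) / ((M 1 0 : ℝ) * θ + (M 1 1 : ℝ)) ∈ Set.Icc (0 : ℝ) 1 := by
  exact good_closure M hM θ hθ
end

section
/- Let a, c, d be integers with a·d = ±1 (so that M = [[a,0],[c,d]] has determinant ±1). Suppose that for every θ ∈ [0,1], cθ+d ≠ 0 and (aθ)/(cθ+d) ∈ [0,1]. Then there exists a natural number n such that M = [[1,0],[n,1]] or M = −[[1,0],[n,1]]; equivalently, M or −M equals A^n for some n ≥ 0. -/
open Matrix

theorem stmt_2 (a c d : ℤ) (hdet : a * d = 1 ∨ a * d = -1)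
    (h : ∀ θ : ℝ, θ ∈ Set.Icc (0 : ℝ) 1 →
      (c : ℝ) * θ + (d : ℝ) ≠ 0 ∧
      ((a : ℝ) * θ) / ((c : ℝ) * θ + (d : ℝ)) ∈ Set.Icc (0 : ℝ) 1) :
    ∃ n : ℕ, !![a, 0; c, d] = !![1, 0; (n : ℤ), 1] ∨
             !![a, 0; c, d] = -(!![1, 0; (n : ℤ), 1]) := by
  have hu : IsUnit (a * d) := by
    rcases hdet with h1 | h1 <;> simp [h1]
  have ha : a = 1 ∨ a = -1 := Int.isUnit_iff.mp (isUnit_of_mul_isUnit_left hu)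
  have hd : d = 1 ∨ d = -1 := Int.isUnit_iff.mp (isUnit_of_mul_isUnit_right hu)
  -- a small positive θ
  set t : ℝ := 1 / (|(c : ℝ)| + 1) with ht
  have hcpos : (0 : ℝ) < |(c : ℝ)| + 1 := by positivity
  have htpos : 0 < t := by positivity
  have htle : t ≤ 1 := by
    rw [ht, div_le_one hcpos]
    have := abs_nonneg (c : ℝ); linarith
  have hct : |(c : ℝ) * t| < 1 := by
    rw [abs_mul, abs_of_pos htpos, ht, mul_one_div, div_lt_one hcpos]
    linarith
  have hct1 : (c : ℝ) * t < 1 := (abs_lt.mp hct).2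
  have hct2 : -1 < (c : ℝ) * t := (abs_lt.mp hct).1
  have hmem : t ∈ Set.Icc (0 : ℝ) 1 := ⟨le_of_lt htpos, htle⟩
  have h1mem : (1 : ℝ) ∈ Set.Icc (0 : ℝ) 1 := by constructor <;> norm_num
  rcases ha with ha | ha <;> rcases hd with hd | hd
  · -- a = 1, d = 1 : need c ≥ 0
    have hc : 0 ≤ c := by
      by_contra hc
      push_neg at hc
      obtain ⟨hne, hmem1, _⟩ := h 1 h1mem
      have hcr : (c : ℝ) ≤ -1 := by exact_mod_cast (by omega : c ≤ -1)
      have hne' : (c : ℝ) * 1 + (d : ℝ) ≠ 0 := hne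
      have hden : (c : ℝ) * 1 + (d : ℝ) < 0 := by
        subst hd; push_cast at hne' ⊢
        rcases lt_or_eq_of_le (by linarith : c * 1 + (1:ℝ) ≤ 0) with h' | h'
        · exact h'
        · exact absurd h' hne'
      have : ((a : ℝ) * 1) / ((c : ℝ) * 1 + (d : ℝ)) < 0 := by
        apply div_neg_of_pos_of_neg _ hden
        subst ha; norm_num
      linarith
    refine ⟨c.toNat, Or.inl ?_⟩
    subst ha; subst hd
    congr 1
    simp [Int.toNat_of_nonneg hc]
  · -- a = 1, d = -1 : contradiction
    exfalso
    obtain ⟨hne, hlo, _⟩ := h t hmem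
    have hden : (c : ℝ) * t + (d : ℝ) < 0 := by subst hd; push_cast; linarith
    have : ((a : ℝ) * t) / ((c : ℝ) * t + (d : ℝ)) < 0 := by
      apply div_neg_of_pos_of_neg _ hden
      subst ha; push_cast; linarith
    linarith
  · -- a = -1, d = 1 : contradiction
    exfalso
    obtain ⟨hne, hlo, _⟩ := h t hmem
    have hden : 0 < (c : ℝ) * t + (d : ℝ) := by subst hd; push_cast; linarith
    have : ((a : ℝ) * t) / ((c : ℝ) * t + (d : ℝ)) < 0 := by
      apply div_neg_of_neg_of_pos _ hden
      subst ha; push_cast; linarith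
    linarith
  · -- a = -1, d = -1 : need c ≤ 0
    have hc : c ≤ 0 := by
      by_contra hc
      push_neg at hc
      obtain ⟨hne, hlo, _⟩ := h 1 h1mem
      have hcr : (1 : ℝ) ≤ (c : ℝ) := by exact_mod_cast (by omega : 1 ≤ c)
      have hne' : (c : ℝ) * 1 + (d : ℝ) ≠ 0 := hne
      have hden : 0 < (c : ℝ) * 1 + (d : ℝ) := by
        subst hd; push_cast at hne' ⊢
        rcases lt_or_eq_of_le (by linarith : (0:ℝ) ≤ c * 1 + -1) with h' | h'
        · exact h'
        · exact absurd h'.symm hne'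
      have : ((a : ℝ) * 1) / ((c : ℝ) * 1 + (d : ℝ)) < 0 := by
        apply div_neg_of_neg_of_pos _ hden
        subst ha; norm_num
      linarith
    refine ⟨(-c).toNat, Or.inr ?_⟩
    subst ha; subst hd
    have : ((-c).toNat : ℤ) = -c := Int.toNat_of_nonneg (by omega)
    ext i j
    fin_cases i <;> fin_cases j <;> simp [this] <;> omega
end

section
/- Fix an integer q ≥ 1 and an integer p, and let ω = exp(2πi·p/q). Let U be the q×q complex cyclic shift matrix (U has entry 1 in positions (i, i+1 mod q) and 0 elsewhere) and let V be the q×q diagonal matrix with diagonal entries ω^0, ω^1, …, ω^{q−1}. Let S ⊆ C be the union, over all complex numbers z₁, z₂ with |z₁| = |z₂| = 1, of the spectra of the matrices H(z₁,z₂) = z₁·U + conj(z₁)·U^H + z₂·V + conj(z₂)·V^H (where ^H denotes conjugate transpose). Then S is symmetric about the origin: x ∈ S if and only if −x ∈ S. -/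
open Matrix

lemma neg_mem_spectrum_neg {A : Type*} [Ring A] [Algebra ℂ A] (a : A) (x : ℂ)
    (hx : x ∈ spectrum ℂ a) : -x ∈ spectrum ℂ (-a) := by
  rw [← spectrum.neg_eq]
  exact Set.neg_mem_neg.mpr hx

theorem stmt_9 (q : ℕ) (hq : 1 ≤ q) (p : ℤ)
    (ω : ℂ) (hω : ω = Complex.exp (2 * Real.pi * Complex.I * (p : ℂ) / (q : ℂ)))
    (U V : Matrix (Fin q) (Fin q) ℂ)
    (hU : U = Matrix.of fun (i j : Fin q) => if (j : ℕ) = ((i : ℕ) + 1) % q then (1 : ℂ) else 0)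
    (hV : V = Matrix.diagonal (fun k : Fin q => ω ^ (k : ℕ)))
    (S : Set ℂ)
    (hS : S = {x : ℂ | ∃ z₁ z₂ : ℂ, ‖z₁‖ = 1 ∧ ‖z₂‖ = 1 ∧
      x ∈ spectrum ℂ
        (z₁ • U + (starRingEnd ℂ z₁) • Uᴴ + z₂ • V + (starRingEnd ℂ z₂) • Vᴴ)}) :
    ∀ x : ℂ, x ∈ S ↔ -x ∈ S := by
  subst hS
  have key : ∀ x : ℂ, x ∈ {x : ℂ | ∃ z₁ z₂ : ℂ, ‖z₁‖ = 1 ∧ ‖z₂‖ = 1 ∧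
      x ∈ spectrum ℂ
        (z₁ • U + (starRingEnd ℂ z₁) • Uᴴ + z₂ • V + (starRingEnd ℂ z₂) • Vᴴ)} →
      -x ∈ {x : ℂ | ∃ z₁ z₂ : ℂ, ‖z₁‖ = 1 ∧ ‖z₂‖ = 1 ∧
      x ∈ spectrum ℂ
        (z₁ • U + (starRingEnd ℂ z₁) • Uᴴ + z₂ • V + (starRingEnd ℂ z₂) • Vᴴ)} := by
    rintro x ⟨z₁, z₂, h1, h2, hx⟩
    refine ⟨-z₁, -z₂, by simpa using h1, by simpa using h2, ?_⟩
    have heq : (-z₁) • U + (starRingEnd ℂ (-z₁)) • Uᴴ + (-z₂) • V + (starRingEnd ℂ (-z₂)) • Vᴴ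
        = -(z₁ • U + (starRingEnd ℂ z₁) • Uᴴ + z₂ • V + (starRingEnd ℂ z₂) • Vᴴ) := by
      simp [neg_smul]
      abel
    rw [heq]
    exact neg_mem_spectrum_neg _ _ hx
  intro x
  exact ⟨key x, fun h => by simpa using key (-x) h⟩
end

section
/- Fix an integer q ≥ 1 and an integer p with 0 ≤ p ≤ q. For an integer m let V_m be the q×q diagonal matrix with diagonal entries exp(2πi·m·k/q) for k = 0,…,q−1, and let U be the q×q complex cyclic shift matrix. Let S(m) ⊆ C be the union, over all complex z₁, z₂ with |z₁| = |z₂| = 1, of the spectra of z₁·U + conj(z₁)·U^H + z₂·V_m + conj(z₂)·V_m^H. Then S(p) = S(q−p). -/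
open Matrix

theorem stmt_10 (q : ℕ) (hq : 1 ≤ q) (p : ℤ) (hp0 : 0 ≤ p) (hpq : p ≤ (q : ℤ))
    (U : Matrix (Fin q) (Fin q) ℂ)
    (hU : U = Matrix.of fun (i j : Fin q) => if (j : ℕ) = ((i : ℕ) + 1) % q then (1 : ℂ) else 0)
    (V : ℤ → Matrix (Fin q) (Fin q) ℂ)
    (hV : V = fun (m : ℤ) => Matrix.diagonal
      (fun k : Fin q => Complex.exp (2 * Real.pi * Complex.I * (m : ℂ) * ((k : ℕ) : ℂ) / (q : ℂ))))
    (S : ℤ → Set ℂ)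
    (hS : S = fun (m : ℤ) => {x : ℂ | ∃ z₁ z₂ : ℂ, ‖z₁‖ = 1 ∧ ‖z₂‖ = 1 ∧
      x ∈ spectrum ℂ
        (z₁ • U + (starRingEnd ℂ z₁) • Uᴴ + z₂ • V m + (starRingEnd ℂ z₂) • (V m)ᴴ)}) :
    S p = S ((q : ℤ) - p) := by
  have hq0 : (q : ℂ) ≠ 0 := Nat.cast_ne_zero.mpr (by omega)
  have hstar : ∀ a : ℂ, star (Complex.exp a) = Complex.exp (star a) :=
    fun a => (Complex.exp_conj a).symm
  have hkey : V ((q : ℤ) - p) = (V p)ᴴ := by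
    subst hV
    simp only [Matrix.diagonal_conjTranspose]
    refine congrArg Matrix.diagonal (funext fun k => ?_)
    rw [Pi.star_apply, hstar]
    have hstar2 : star (2 * (Real.pi : ℂ) * Complex.I * (p : ℂ) * ((k : ℕ) : ℂ) / (q : ℂ))
        = -(2 * (Real.pi : ℂ) * Complex.I * (p : ℂ) * ((k : ℕ) : ℂ) / (q : ℂ)) := by
      simp [map_div₀, _root_.map_mul, Complex.conj_I]
      ring
    rw [hstar2]
    have harg : 2 * (Real.pi : ℂ) * Complex.I * (((q : ℤ) - p : ℤ) : ℂ) * ((k : ℕ) : ℂ) / (q : ℂ)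
        = -(2 * (Real.pi : ℂ) * Complex.I * (p : ℂ) * ((k : ℕ) : ℂ) / (q : ℂ))
          + ((k : ℤ) : ℂ) * (2 * Real.pi * Complex.I) := by
      push_cast
      field_simp
      ring
    rw [harg, Complex.exp_add, Complex.exp_int_mul_two_pi_mul_I, mul_one]
  have hVH : (V ((q : ℤ) - p))ᴴ = V p := by rw [hkey, conjTranspose_conjTranspose]
  subst hS
  ext x
  simp only [Set.mem_setOf_eq]
  constructor
  · rintro ⟨z₁, z₂, h1, h2, hx⟩
    refine ⟨z₁, starRingEnd ℂ z₂, h1, by simpa using h2, ?_⟩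
    rw [hkey]
    simp only [Complex.conj_conj, conjTranspose_conjTranspose]
    rw [add_right_comm]
    exact hx
  · rintro ⟨z₁, z₂, h1, h2, hx⟩
    rw [hkey] at hx
    simp only [conjTranspose_conjTranspose] at hx
    refine ⟨z₁, starRingEnd ℂ z₂, h1, by simpa using h2, ?_⟩
    rw [add_right_comm] at hx
    simpa using hx
end

section
/- Let a, b, c, d be integers and r a natural number. Assume that for all real θ ∈ [0,1], a·θ + b > 0 and c·θ + d > 0. Then the following are equivalent: (i) for all integers p, q with 0 ≤ p ≤ q and q ≥ 1, one has r·(a·p + b·q) + q ≤ c·p + d·q; (ii) for all real θ ∈ [0,1], r ≤ (c·θ + d − 1)/(a·θ + b). -/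
theorem stmt_13 (a b c d : ℤ) (r : ℕ)
    (hab : ∀ θ : ℝ, θ ∈ Set.Icc (0 : ℝ) 1 → 0 < (a : ℝ) * θ + (b : ℝ))
    (hcd : ∀ θ : ℝ, θ ∈ Set.Icc (0 : ℝ) 1 → 0 < (c : ℝ) * θ + (d : ℝ)) :
    (∀ p q : ℤ, 0 ≤ p → p ≤ q → 1 ≤ q →
        (r : ℤ) * (a * p + b * q) + q ≤ c * p + d * q) ↔
    (∀ θ : ℝ, θ ∈ Set.Icc (0 : ℝ) 1 →
        (r : ℝ) ≤ ((c : ℝ) * θ + (d : ℝ) - 1) / ((a : ℝ) * θ + (b : ℝ))) := by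
  constructor
  · intro h θ hθ
    obtain ⟨hθ0, hθ1⟩ := hθ
    have h0 : (r : ℤ) * (a * 0 + b * 1) + 1 ≤ c * 0 + d * 1 := h 0 1 le_rfl zero_le_one le_rfl
    have h1 : (r : ℤ) * (a * 1 + b * 1) + 1 ≤ c * 1 + d * 1 := h 1 1 zero_le_one le_rfl le_rfl
    have h0' : (r : ℝ) * b + 1 ≤ d := by exact_mod_cast (by linarith : (r : ℤ) * b + 1 ≤ d)
    have h1' : (r : ℝ) * (a + b) + 1 ≤ c + d := by
      exact_mod_cast (by linarith : (r : ℤ) * (a + b) + 1 ≤ c + d)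
    have hpos := hab θ ⟨hθ0, hθ1⟩
    rw [le_div_iff₀ hpos]
    nlinarith [mul_nonneg hθ0 (sub_nonneg.mpr hθ1)]
  · intro h p q hp hpq hq
    have hq0 : (0 : ℝ) < (q : ℝ) := by exact_mod_cast hq
    set θ : ℝ := (p : ℝ) / (q : ℝ) with hθdef
    have hθmem : θ ∈ Set.Icc (0 : ℝ) 1 := by
      constructor
      · positivity
      · rw [div_le_one hq0]; exact_mod_cast hpq
    have hpos := hab θ hθmem
    have hle := h θ hθmem
    rw [le_div_iff₀ hpos] at hle
    have hθq : θ * q = p := div_mul_cancel₀ _ hq0.ne'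
    have key : (r : ℝ) * ((a : ℝ) * p + b * q) + q ≤ c * p + d * q := by
      have h2 := mul_le_mul_of_nonneg_right hle (le_of_lt hq0)
      have e1 : (r : ℝ) * ((a : ℝ) * (θ * q)) = (r : ℝ) * ((a : ℝ) * p) := by rw [hθq]
      have e2 : (c : ℝ) * (θ * q) = (c : ℝ) * p := by rw [hθq]
      nlinarith [h2, e1, e2]
    have : ((r : ℤ) * (a * p + b * q) + q : ℝ) ≤ ((c * p + d * q : ℤ) : ℝ) := by
      push_cast; linarith
    exact_mod_cast this
end

section
/- Let a, b, c, d be integers and r a natural number. Assume that for all real θ ∈ [0,1], (c−a)·θ + (d−b) > 0 and c·θ + d > 0. Then the following are equivalent: (i) for all integers p, q with 0 ≤ p ≤ q and q ≥ 1, one has r·((c−a)·p + (d−b)·q) + q ≤ c·p + d·q; (ii) for all real θ ∈ [0,1], r ≤ (c·θ + d − 1)/((c−a)·θ + (d−b)). -/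
theorem stmt_14 (a b c d : ℤ) (r : ℕ)
    (hab : ∀ θ : ℝ, θ ∈ Set.Icc (0 : ℝ) 1 → 0 < ((c : ℝ) - (a : ℝ)) * θ + ((d : ℝ) - (b : ℝ)))
    (hcd : ∀ θ : ℝ, θ ∈ Set.Icc (0 : ℝ) 1 → 0 < (c : ℝ) * θ + (d : ℝ)) :
    (∀ p q : ℤ, 0 ≤ p → p ≤ q → 1 ≤ q →
        (r : ℤ) * ((c - a) * p + (d - b) * q) + q ≤ c * p + d * q) ↔
    (∀ θ : ℝ, θ ∈ Set.Icc (0 : ℝ) 1 →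
        (r : ℝ) ≤ ((c : ℝ) * θ + (d : ℝ) - 1) / (((c : ℝ) - (a : ℝ)) * θ + ((d : ℝ) - (b : ℝ)))) := by
  constructor
  · intro h θ hθ
    obtain ⟨hθ0, hθ1⟩ := hθ
    have h0 := h 0 1 le_rfl zero_le_one le_rfl
    have h1 := h 1 1 zero_le_one le_rfl le_rfl
    have H0 : (r : ℝ) * ((d : ℝ) - b) ≤ (d : ℝ) - 1 := by
      have : (r : ℤ) * ((d : ℤ) - b) ≤ d - 1 := by linarith
      exact_mod_cast this
    have H1 : (r : ℝ) * (((c : ℝ) - a) + ((d : ℝ) - b)) ≤ (c : ℝ) + d - 1 := by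
      have : (r : ℤ) * (((c : ℤ) - a) + ((d : ℤ) - b)) ≤ c + d - 1 := by linarith
      exact_mod_cast this
    rw [le_div_iff₀ (hab θ ⟨hθ0, hθ1⟩)]
    nlinarith [mul_nonneg hθ0 (sub_nonneg.mpr H1), mul_nonneg (sub_nonneg.mpr hθ1) (sub_nonneg.mpr H0)]
  · intro h p q hp hpq hq
    have hq' : (0 : ℝ) < (q : ℝ) := by exact_mod_cast lt_of_lt_of_le zero_lt_one hq
    set θ : ℝ := (p : ℝ) / (q : ℝ) with hθdef
    have hθ0 : 0 ≤ θ := div_nonneg (by exact_mod_cast hp) hq'.le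
    have hθ1 : θ ≤ 1 := by
      rw [div_le_one hq']
      exact_mod_cast hpq
    have key := h θ ⟨hθ0, hθ1⟩
    rw [le_div_iff₀ (hab θ ⟨hθ0, hθ1⟩)] at key
    have hmul := mul_le_mul_of_nonneg_right key hq'.le
    have hθq : θ * (q : ℝ) = (p : ℝ) := div_mul_cancel₀ _ hq'.ne'
    have e1 : (r : ℝ) * (((c : ℝ) - a) * θ + ((d : ℝ) - b)) * q
        = (r : ℝ) * (((c : ℝ) - a) * p + ((d : ℝ) - b) * q) := by rw [← hθq]; ring
    have e2 : ((c : ℝ) * θ + d - 1) * q = (c : ℝ) * p + d * q - q := by rw [← hθq]; ring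
    have final : (r : ℝ) * (((c : ℝ) - a) * p + ((d : ℝ) - b) * q) + q ≤ (c : ℝ) * p + d * q := by
      rw [e1, e2] at hmul; linarith
    exact_mod_cast final
end
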